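/- (Smooth-sensitivity bound for the offset threshold) Let n be a natural number, b > 0, and let f : (Fin n → ℝ) → ℝ be a bounded function. Let a > 0 and o ≥ 0 be reals with (exp(b) − 1) · o / a < 1, and set κ = (1 − (exp(b) − 1) · o / a)⁻¹. Define g : (Fin n → ℝ) → ℝ by g(σ) = f(σ) + (κ · o / a) · SS_{σ,b}(f). Then for every stream σ, SS_{σ,b}(g) ≤ κ · SS_{σ,b}(f). In particular κ · SS_{σ,b}(f) is a b-smooth upper bound on the local sensitivity of g. -/

import Mathlib

/-- Local sensitivity of `c` at `σ`: the supremum of `|c σ - c σ'|` over streams `σ'`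
adjacent to `σ` (Hamming distance 1). -/
noncomputable def localSens {n : ℕ} (c : (Fin n → ℝ) → ℝ) (σ : Fin n → ℝ) : ℝ :=
  sSup {x : ℝ | ∃ σ' : Fin n → ℝ, hammingDist σ σ' = 1 ∧ x = |c σ - c σ'|}

/-- `b`-smooth sensitivity of `c` at `σ`: the supremum of
`LS_{σ'}(c) · exp(-b · d(σ, σ'))` over all streams `σ'`. -/
noncomputable def smoothSens {n : ℕ} (b : ℝ) (c : (Fin n → ℝ) → ℝ) (σ : Fin n → ℝ) : ℝ :=
  sSup {x : ℝ | ∃ σ' : Fin n → ℝ, x = localSens c σ' * Real.exp (-(b * hammingDist σ σ'))}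

/-!
Smooth sensitivity is the least `b`-smooth upper bound on local sensitivity: any `h` with
`LS_τ ≤ h τ` and `h τ ≤ exp (b · d(σ, τ)) · h σ` dominates `SS_{·,b}`. So it suffices to show that
`κ · SS_{·,b}(f)` is such a bound for `g = f + c · SS_{·,b}(f)`, `c = κ o / a`. Smoothness is
inherited from `SS_{·,b}(f)`. On adjacent streams `SS_{·,b}(f)` changes by at most a factor `exp b`,
so `|g τ - g τ'| ≤ LS_τ(f) + c (exp b - 1) SS_{τ,b}(f) ≤ (1 + c (exp b - 1)) SS_{τ,b}(f)`, and
`1 + c (exp b - 1) = κ` is exactly the defining equation of `κ`.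
-/

open Real

lemma abs_sub_le_mul_of_le_mul {x y e : ℝ} (hx : 0 ≤ x) (he : 1 ≤ e) (hyx : y ≤ e * x)
    (hxy : x ≤ e * y) : |x - y| ≤ (e - 1) * x := by
  rw [abs_sub_le_iff]
  refine ⟨?_, by linarith⟩
  -- `e * (y - (2 - e) x) ≥ x - (2 - e) e x = (e - 1)² x ≥ 0`
  have : 0 ≤ e * (y - (2 - e) * x) := by nlinarith [mul_nonneg hx (sq_nonneg (e - 1))]
  linarith [nonneg_of_mul_nonneg_right this (by linarith)]

section Sensitivity

variable {n : ℕ} {b M : ℝ} {f : (Fin n → ℝ) → ℝ}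

lemma localSens_nonneg (f : (Fin n → ℝ) → ℝ) (σ : Fin n → ℝ) : 0 ≤ localSens f σ :=
  Real.sSup_nonneg (by rintro x ⟨σ', -, rfl⟩; exact abs_nonneg _)

lemma abs_sub_le_two_mul (hM : ∀ σ, |f σ| ≤ M) (σ τ : Fin n → ℝ) : |f σ - f τ| ≤ 2 * M := by
  linarith [abs_sub (f σ) (f τ), hM σ, hM τ]

lemma abs_sub_le_localSens (hM : ∀ σ, |f σ| ≤ M) {σ σ' : Fin n → ℝ}
    (hd : hammingDist σ σ' = 1) : |f σ - f σ'| ≤ localSens f σ :=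
  le_csSup ⟨2 * M, by rintro x ⟨τ, -, rfl⟩; exact abs_sub_le_two_mul hM σ τ⟩ ⟨σ', hd, rfl⟩

lemma localSens_le_two_mul (hM : ∀ σ, |f σ| ≤ M) (σ : Fin n → ℝ) : localSens f σ ≤ 2 * M :=
  Real.sSup_le (by rintro x ⟨σ', -, rfl⟩; exact abs_sub_le_two_mul hM σ σ')
    (by linarith [(abs_nonneg _).trans (hM σ)])

lemma exp_neg_mul_hammingDist_le_one (hb : 0 ≤ b) (σ τ : Fin n → ℝ) :
    exp (-(b * hammingDist σ τ)) ≤ 1 :=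
  exp_le_one_iff.2 (neg_nonpos.2 (mul_nonneg hb (Nat.cast_nonneg _)))

lemma localSens_mul_exp_le_smoothSens (hb : 0 ≤ b) (hM : ∀ σ, |f σ| ≤ M) (σ σ' : Fin n → ℝ) :
    localSens f σ' * exp (-(b * hammingDist σ σ')) ≤ smoothSens b f σ := by
  refine le_csSup ⟨2 * M, ?_⟩ ⟨σ', rfl⟩
  rintro x ⟨τ, rfl⟩
  calc localSens f τ * exp (-(b * hammingDist σ τ)) ≤ 2 * M * 1 :=
        mul_le_mul (localSens_le_two_mul hM τ) (exp_neg_mul_hammingDist_le_one hb σ τ)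
          (exp_pos _).le (by linarith [(abs_nonneg _).trans (hM σ)])
    _ = 2 * M := mul_one _

lemma localSens_le_smoothSens (hb : 0 ≤ b) (hM : ∀ σ, |f σ| ≤ M) (σ : Fin n → ℝ) :
    localSens f σ ≤ smoothSens b f σ := by
  simpa using localSens_mul_exp_le_smoothSens hb hM σ σ

lemma smoothSens_nonneg (b : ℝ) (f : (Fin n → ℝ) → ℝ) (σ : Fin n → ℝ) :
    0 ≤ smoothSens b f σ :=
  Real.sSup_nonneg (by rintro x ⟨σ', rfl⟩; exact mul_nonneg (localSens_nonneg f σ') (exp_pos _).le)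

lemma smoothSens_le_of_smooth_bound {h : (Fin n → ℝ) → ℝ} (hLS : ∀ τ, localSens f τ ≤ h τ)
    (hsmooth : ∀ σ τ, h τ ≤ exp (b * hammingDist σ τ) * h σ) (σ : Fin n → ℝ) :
    smoothSens b f σ ≤ h σ := by
  refine csSup_le ⟨_, σ, rfl⟩ ?_
  rintro x ⟨τ, rfl⟩
  calc localSens f τ * exp (-(b * hammingDist σ τ))
      ≤ exp (b * hammingDist σ τ) * h σ * exp (-(b * hammingDist σ τ)) :=
        mul_le_mul_of_nonneg_right ((hLS τ).trans (hsmooth σ τ)) (exp_pos _).le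
    _ = h σ := by rw [mul_comm, ← mul_assoc, ← exp_add, neg_add_cancel, exp_zero, one_mul]

lemma smoothSens_le_exp_mul_smoothSens (hb : 0 ≤ b) (hM : ∀ σ, |f σ| ≤ M)
    (σ τ : Fin n → ℝ) : smoothSens b f τ ≤ exp (b * hammingDist σ τ) * smoothSens b f σ := by
  refine csSup_le ⟨_, τ, rfl⟩ ?_
  rintro x ⟨ρ, rfl⟩
  have htri : (hammingDist σ ρ : ℝ) ≤ hammingDist σ τ + hammingDist τ ρ := by
    exact_mod_cast hammingDist_triangle σ τ ρ
  calc localSens f ρ * exp (-(b * hammingDist τ ρ))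
      ≤ localSens f ρ * (exp (b * hammingDist σ τ) * exp (-(b * hammingDist σ ρ))) := by
        refine mul_le_mul_of_nonneg_left ?_ (localSens_nonneg f ρ)
        rw [← exp_add, exp_le_exp]
        nlinarith
    _ = exp (b * hammingDist σ τ) * (localSens f ρ * exp (-(b * hammingDist σ ρ))) := by ring
    _ ≤ exp (b * hammingDist σ τ) * smoothSens b f σ :=
        mul_le_mul_of_nonneg_left (localSens_mul_exp_le_smoothSens hb hM σ ρ) (exp_pos _).le

lemma abs_smoothSens_sub_le (hb : 0 ≤ b) (hM : ∀ σ, |f σ| ≤ M) {τ τ' : Fin n → ℝ}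
    (hd : hammingDist τ τ' = 1) :
    |smoothSens b f τ - smoothSens b f τ'| ≤ (exp b - 1) * smoothSens b f τ := by
  have hd' : (hammingDist τ' τ : ℝ) = 1 := by rw [hammingDist_comm]; exact_mod_cast hd
  have hd : (hammingDist τ τ' : ℝ) = 1 := by exact_mod_cast hd
  refine abs_sub_le_mul_of_le_mul (smoothSens_nonneg b f τ) (one_le_exp hb) ?_ ?_
  · simpa [hd] using smoothSens_le_exp_mul_smoothSens hb hM τ τ'
  · simpa [hd'] using smoothSens_le_exp_mul_smoothSens hb hM τ' τ

lemma localSens_add_mul_smoothSens_le (hb : 0 ≤ b) (hM : ∀ σ, |f σ| ≤ M) {c : ℝ} (hc : 0 ≤ c)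
    (τ : Fin n → ℝ) :
    localSens (fun σ => f σ + c * smoothSens b f σ) τ
      ≤ (1 + c * (exp b - 1)) * smoothSens b f τ := by
  refine Real.sSup_le ?_ (mul_nonneg (by nlinarith [one_le_exp hb]) (smoothSens_nonneg b f τ))
  rintro x ⟨τ', hd, rfl⟩
  calc |f τ + c * smoothSens b f τ - (f τ' + c * smoothSens b f τ')|
      = |(f τ - f τ') + c * (smoothSens b f τ - smoothSens b f τ')| := by ring_nf
    _ ≤ |f τ - f τ'| + c * |smoothSens b f τ - smoothSens b f τ'| := by
        rw [← abs_of_nonneg hc, ← abs_mul, abs_of_nonneg hc]; exact abs_add_le _ _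
    _ ≤ smoothSens b f τ + c * ((exp b - 1) * smoothSens b f τ) :=
        add_le_add ((abs_sub_le_localSens hM hd).trans (localSens_le_smoothSens hb hM τ))
          (mul_le_mul_of_nonneg_left (abs_smoothSens_sub_le hb hM hd) hc)
    _ = (1 + c * (exp b - 1)) * smoothSens b f τ := by ring

end Sensitivity

/-- (Smooth-sensitivity bound for the offset threshold) If
`g(σ) = f(σ) + (κ·o/a)·SS_{σ,b}(f)` with `κ = (1 − (exp(b) − 1)·o/a)⁻¹`, then
`SS_{σ,b}(g) ≤ κ · SS_{σ,b}(f)`; in particular `κ · SS_{σ,b}(f)` is a `b`-smooth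
upper bound on the local sensitivity of `g`. -/
theorem smoothSens_offset_threshold {n : ℕ} (b : ℝ) (hb : 0 < b)
    (f : (Fin n → ℝ) → ℝ) (M : ℝ) (hM : ∀ σ : Fin n → ℝ, |f σ| ≤ M)
    (a o : ℝ) (ha : 0 < a) (ho : 0 ≤ o)
    (hsmall : (Real.exp b - 1) * o / a < 1)
    (κ : ℝ) (hκ : κ = (1 - (Real.exp b - 1) * o / a)⁻¹)
    (g : (Fin n → ℝ) → ℝ)
    (hg : ∀ σ : Fin n → ℝ, g σ = f σ + (κ * o / a) * smoothSens b f σ) :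
    (∀ σ : Fin n → ℝ, smoothSens b g σ ≤ κ * smoothSens b f σ) ∧
    (∀ σ : Fin n → ℝ, localSens g σ ≤ κ * smoothSens b f σ) ∧
    (∀ σ σ' : Fin n → ℝ, hammingDist σ σ' = 1 →
      κ * smoothSens b f σ ≤ Real.exp b * (κ * smoothSens b f σ')) := by
  have hκ0 : 0 ≤ κ := hκ ▸ inv_nonneg.2 (by linarith)
  have hκ_eq : 1 + κ * o / a * (exp b - 1) = κ := by
    have : κ * (1 - (exp b - 1) * o / a) = 1 := hκ ▸ inv_mul_cancel₀ (by linarith)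
    field_simp at this ⊢
    linarith
  obtain rfl : g = fun σ => f σ + κ * o / a * smoothSens b f σ := funext hg
  have hLS : ∀ σ, localSens _ σ ≤ κ * smoothSens b f σ := fun σ =>
    hκ_eq ▸ localSens_add_mul_smoothSens_le hb.le hM (by positivity) σ
  have hsmooth : ∀ σ τ, κ * smoothSens b f τ ≤ exp (b * hammingDist σ τ) * (κ * smoothSens b f σ) :=
    fun σ τ => by
      rw [mul_left_comm]
      exact mul_le_mul_of_nonneg_left (smoothSens_le_exp_mul_smoothSens hb.le hM σ τ) hκ0
  refine ⟨smoothSens_le_of_smooth_bound hLS hsmooth, hLS, fun σ σ' hd => ?_⟩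
  simpa [hammingDist_comm σ' σ, hd] using hsmooth σ' σ
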